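/- In the state category of the net N_n, if x·μ = y where x is a state beginning with 1 (ε₁ = 1) and y a state beginning with 0, then μ admits a decomposition μ = t_k t_{k-1} ⋯ t₂ μ′ in the trace monoid for some k ≥ 2, and necessarily x = 1⋯1 0 ε_{k+1}⋯ε_{n-1} (k−1 ones followed by a zero). -/

import Mathlib

/-! Concrete pipeline Petri nets. States of a net with `m` places are `Fin m → Bool`. -/

/-- The "tail" pipeline net `N` with `m` places `p₁,…,p_m` (0-indexed `0,…,m-1`) and `m`
events `t₂,…,t_{m+1}` (0-indexed: event `j` is `t_{j+2}` with `pre = {p_{j+1}}`, i.e. place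
`j`, and `post = {p_{j+2}}`, i.e. place `j+1`, when `j+1 < m`, and `post = ∅` for the last
event).  `stepT m s e` is the partial firing of event `e` at state `s`. -/
def stepT (m : ℕ) (s : Fin m → Bool) (e : Fin m) : Option (Fin m → Bool) :=
  if s e = true then
    if h : (e : ℕ) + 1 < m then
      if s ⟨(e : ℕ) + 1, h⟩ = false then
        some (Function.update (Function.update s e false) ⟨(e : ℕ) + 1, h⟩ true)
      else none
    else some (Function.update s e false)
  else none

/-- Firing a word (list) of events, `s · (a :: l) = (s · a) · l`. -/
def stepsT (m : ℕ) : (Fin m → Bool) → List (Fin m) → Option (Fin m → Bool)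
  | s, [] => some s
  | s, a :: l => (stepT m s a).bind fun s' => stepsT m s' l

/-- Resources (`pre ∪ post`, as a set of 0-indexed places) of event `e` of the tail net. -/
def resT (m : ℕ) (e : Fin m) : Set ℕ :=
  {x | x = (e : ℕ) ∨ (x = (e : ℕ) + 1 ∧ (e : ℕ) + 1 < m)}

/-- Independence of events of the tail net: disjoint resources. -/
def indepT (m : ℕ) (a b : Fin m) : Prop :=
  ∀ x, ¬(x ∈ resT m a ∧ x ∈ resT m b)

/-- One swap of adjacent independent letters in a word. -/
inductive TraceStep {E : Type} (r : E → E → Prop) : List E → List E → Prop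
  | swap (u v : List E) (a b : E) : r a b →
      TraceStep r (u ++ a :: b :: v) (u ++ b :: a :: v)

/-- Trace equivalence: two words represent the same element of the trace monoid `M(E,I)`
iff they are related by the equivalence closure of adjacent swaps of independent letters. -/
def TraceEquiv {E : Type} (r : E → E → Prop) : List E → List E → Prop :=
  Relation.EqvGen (TraceStep r)

/-- The word `t_k t_{k-1} ⋯ t₂` of the net `N_n`, as the list of 0-indexed events
`[k-2, k-3, …, 0]` (event `i` is `t_{i+2}`). -/
def descList (m k : ℕ) : List (Fin m) :=
  (List.range (k - 1)).reverse.filterMap fun i =>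
    if h : i < m then some ⟨i, h⟩ else none

/-!
Let `j` be the first empty place of `x`, so places `0, …, j - 1` are marked and `j ≥ 1`. At such
a state the only enabled events are `t_{j+1}` (0-indexed `j - 1`, moving the last token of the
block forward) and events beyond place `j`, which are independent of `t_{j+1}` and leave the
block untouched. Since place `0` is empty at the end, the block must be broken, so `t_{j+1}`
occurs in `μ`, and its first occurrence commutes to the front. Firing it leaves the block
`0, …, j - 2` followed by an empty place, and induction on `j` peels off `t_j ⋯ t₂`.
-/

section Trace

variable {E : Type} {r : E → E → Prop}

theorem TraceEquiv.cons (c : E) {l₁ l₂ : List E} (h : TraceEquiv r l₁ l₂) :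
    TraceEquiv r (c :: l₁) (c :: l₂) := by
  induction h with
  | rel _ _ hstep =>
    obtain ⟨u, v, a, b, hab⟩ := hstep
    exact .rel _ _ (.swap (c :: u) v a b hab)
  | refl => exact .refl _
  | symm _ _ _ ih => exact .symm _ _ ih
  | trans _ _ _ _ _ ih₁ ih₂ => exact .trans _ _ _ ih₁ ih₂

theorem traceEquiv_append_cons {a : E} (pre suf : List E) (hpre : ∀ b ∈ pre, r b a) :
    TraceEquiv r (pre ++ a :: suf) (a :: (pre ++ suf)) := by
  induction pre with
  | nil => exact .refl _
  | cons c pre ih =>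
    have hc : r c a := hpre c List.mem_cons_self
    exact .trans _ _ _ ((ih fun b hb => hpre b (List.mem_cons_of_mem _ hb)).cons c)
      (.rel _ _ (.swap [] (pre ++ suf) c a hc))

end Trace

section Net

variable {m : ℕ}

theorem indepT_iff {a b : Fin m} : indepT m a b ↔ (a : ℕ) + 2 ≤ b ∨ (b : ℕ) + 2 ≤ a := by
  constructor
  · intro h
    have := a.isLt
    have := b.isLt
    have h₁ := h a
    have h₂ := h b
    have h₃ := h ((a : ℕ) + 1)
    simp only [resT, Set.mem_ofPred_eq, true_or, true_and] at h₁ h₂ h₃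
    omega
  · rintro hab x ⟨hxa, hxb⟩
    simp only [resT, Set.mem_ofPred_eq] at hxa hxb
    omega

theorem indepT.symm {a b : Fin m} (h : indepT m a b) : indepT m b a :=
  fun x hx => h x hx.symm

def Enabled (s : Fin m → Bool) (e : Fin m) : Prop :=
  s e = true ∧ ∀ h : (e : ℕ) + 1 < m, s ⟨(e : ℕ) + 1, h⟩ = false

def fire (s : Fin m → Bool) (e : Fin m) : Fin m → Bool :=
  fun j => if (j : ℕ) = e then false else if (j : ℕ) = (e : ℕ) + 1 then true else s j

theorem stepT_eq_some_iff {s s' : Fin m → Bool} {e : Fin m} :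
    stepT m s e = some s' ↔ Enabled s e ∧ s' = fire s e := by
  have update_eq : ∀ (h : (e : ℕ) + 1 < m),
      Function.update (Function.update s e false) ⟨(e : ℕ) + 1, h⟩ true = fire s e := by
    intro h
    funext j
    simp only [Function.update_apply, fire, Fin.ext_iff]
    split_ifs <;> first | rfl | omega
  have update_eq_last : (e : ℕ) + 1 = m → Function.update s e false = fire s e := by
    intro h
    funext j
    simp only [Function.update_apply, fire, Fin.ext_iff]
    split_ifs <;> first | rfl | omega
  unfold stepT Enabled
  split_ifs with hse hlt hnext
  · rw [update_eq hlt, Option.some_inj, eq_comm]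
    simp [hse, hnext]
  · simp_all
  · rw [update_eq_last (by omega), Option.some_inj, eq_comm]
    simp [hse, hlt]
  · simp [hse]

theorem enabled_fire_iff {a b : Fin m} (hab : indepT m a b) (s : Fin m → Bool) :
    Enabled (fire s b) a ↔ Enabled s a := by
  have hgap := indepT_iff.mp hab
  have ha : fire s b a = s a := by simp only [fire]; split_ifs <;> first | rfl | omega
  have ha₁ : ∀ h : (a : ℕ) + 1 < m, fire s b ⟨(a : ℕ) + 1, h⟩ = s ⟨(a : ℕ) + 1, h⟩ := by
    intro h
    simp only [fire]
    split_ifs <;> first | rfl | omega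
  simp only [Enabled, ha, ha₁]

theorem fire_comm {a b : Fin m} (hab : indepT m a b) (s : Fin m → Bool) :
    fire (fire s a) b = fire (fire s b) a := by
  have hgap := indepT_iff.mp hab
  funext j
  simp only [fire]
  split_ifs <;> first | rfl | omega

theorem stepT_comm {a b : Fin m} (hab : indepT m a b) {s t u : Fin m → Bool}
    (hb : stepT m s b = some t) (ha : stepT m t a = some u) :
    ∃ t', stepT m s a = some t' ∧ stepT m t' b = some u := by
  obtain ⟨hsb, rfl⟩ := stepT_eq_some_iff.mp hb
  obtain ⟨hta, rfl⟩ := stepT_eq_some_iff.mp ha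
  refine ⟨fire s a, stepT_eq_some_iff.mpr ⟨(enabled_fire_iff hab s).mp hta, rfl⟩,
    stepT_eq_some_iff.mpr ⟨(enabled_fire_iff hab.symm s).mpr hsb, fire_comm hab.symm s⟩⟩

theorem stepsT_cons_eq_some {s y : Fin m → Bool} {a : Fin m} {l : List (Fin m)} :
    stepsT m s (a :: l) = some y ↔ ∃ t, stepT m s a = some t ∧ stepsT m t l = some y := by
  simp only [stepsT, Option.bind_eq_some_iff]

theorem stepsT_cons_of_append_cons {a : Fin m} (pre suf : List (Fin m))
    (hpre : ∀ b ∈ pre, indepT m a b) {s y : Fin m → Bool}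
    (h : stepsT m s (pre ++ a :: suf) = some y) :
    stepsT m s (a :: (pre ++ suf)) = some y := by
  induction pre generalizing s with
  | nil => simpa using h
  | cons b pre ih =>
    obtain ⟨t, hbt, hrest⟩ := stepsT_cons_eq_some.mp h
    obtain ⟨u, htu, hu⟩ :=
      stepsT_cons_eq_some.mp (ih (fun c hc => hpre c (List.mem_cons_of_mem _ hc)) hrest)
    obtain ⟨t', hst', ht'u⟩ := stepT_comm (hpre b List.mem_cons_self) hbt htu
    exact stepsT_cons_eq_some.mpr ⟨t', hst', stepsT_cons_eq_some.mpr ⟨u, ht'u, hu⟩⟩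

/-- `j = m` means that every place is marked. -/
structure IsFirstEmpty (s : Fin m → Bool) (j : ℕ) : Prop where
  le : j ≤ m
  marked : ∀ i : Fin m, (i : ℕ) < j → s i = true
  empty : ∀ h : j < m, s ⟨j, h⟩ = false

theorem exists_isFirstEmpty (s : Fin m → Bool) : ∃ j, IsFirstEmpty s j := by
  classical
  have hm : ∃ j, ∀ h : j < m, s ⟨j, h⟩ = false := ⟨m, fun h => absurd h (lt_irrefl m)⟩
  refine ⟨Nat.find hm, Nat.find_min' hm fun h => absurd h (lt_irrefl m), fun i hi => ?_,
    Nat.find_spec hm⟩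
  by_contra hsi
  exact Nat.find_min hm hi fun _ => by simpa using hsi

theorem IsFirstEmpty.enabled_cases {s : Fin m → Bool} {j : ℕ} (hs : IsFirstEmpty s j)
    {e : Fin m} (he : Enabled s e) : (e : ℕ) + 1 = j ∨ j < e := by
  by_contra! hej
  rcases (show (e : ℕ) = j ∨ (e : ℕ) + 1 < j by omega) with hej' | hlt
  · subst hej'
    simp [hs.empty e.isLt, Enabled] at he
  · have hlt' : (e : ℕ) + 1 < m := lt_of_lt_of_le hlt hs.le
    have := hs.marked ⟨(e : ℕ) + 1, hlt'⟩ hlt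
    simp_all [Enabled]

theorem IsFirstEmpty.fire_of_lt {s : Fin m → Bool} {j : ℕ} (hs : IsFirstEmpty s j)
    {e : Fin m} (hje : j < e) : IsFirstEmpty (fire s e) j where
  le := hs.le
  marked i hi := by
    simp only [fire]
    split_ifs <;> first | omega | exact hs.marked i hi
  empty h := by
    simp only [fire]
    split_ifs <;> first | omega | exact hs.empty h

theorem IsFirstEmpty.fire_self {s : Fin m → Bool} {e : Fin m}
    (hs : IsFirstEmpty s ((e : ℕ) + 1)) : IsFirstEmpty (fire s e) e where
  le := e.isLt.le
  marked i hi := by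
    simp only [fire]
    split_ifs <;> first | omega | exact hs.marked i (by omega)
  empty h := by simp [fire]

theorem descList_add_two {j : ℕ} (hj : j < m) :
    descList m (j + 2) = ⟨j, hj⟩ :: descList m (j + 1) := by
  simp [descList, List.range_succ, hj]

variable (h0 : 0 < m)

theorem exists_append_cons_of_isFirstEmpty {j : ℕ} :
    ∀ {l : List (Fin m)} {s y : Fin m → Bool}, IsFirstEmpty s (j + 1) →
      stepsT m s l = some y → y ⟨0, h0⟩ = false →
      ∃ (pre : List (Fin m)) (a : Fin m) (suf : List (Fin m)),
        l = pre ++ a :: suf ∧ (a : ℕ) = j ∧ ∀ b ∈ pre, j + 2 ≤ (b : ℕ)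
  | [], s, y, hs, h, hy => by
    obtain rfl : s = y := Option.some_inj.mp h
    simp [hs.marked ⟨0, h0⟩ (Nat.succ_pos j)] at hy
  | e :: rest, s, y, hs, h, hy => by
    obtain ⟨t, het, hrest⟩ := stepsT_cons_eq_some.mp h
    obtain ⟨he, rfl⟩ := stepT_eq_some_iff.mp het
    rcases hs.enabled_cases he with hej | hje
    · exact ⟨[], e, rest, rfl, by omega, by simp⟩
    · obtain ⟨pre, a, suf, rfl, ha, hpre⟩ :=
        exists_append_cons_of_isFirstEmpty (hs.fire_of_lt hje) hrest hy
      refine ⟨e :: pre, a, suf, rfl, ha, ?_⟩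
      rintro b (_ | ⟨_, hb⟩)
      exacts [by omega, hpre b hb]

theorem exists_traceEquiv_descList_append (j : ℕ) :
    ∀ {l : List (Fin m)} {s y : Fin m → Bool}, IsFirstEmpty s j →
      stepsT m s l = some y → y ⟨0, h0⟩ = false →
      ∃ l', TraceEquiv (indepT m) l (descList m (j + 1) ++ l') := by
  induction j with
  | zero =>
    intro l _ _ _ _ _
    exact ⟨l, by simpa [descList] using .refl _⟩
  | succ j ih =>
    intro l s y hs h hy
    obtain ⟨pre, a, suf, rfl, rfl, hpre⟩ := exists_append_cons_of_isFirstEmpty h0 hs h hy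
    have hind : ∀ b ∈ pre, indepT m a b := fun b hb => indepT_iff.mpr (.inl (hpre b hb))
    obtain ⟨t, hat, hrest⟩ := stepsT_cons_eq_some.mp (stepsT_cons_of_append_cons pre suf hind h)
    obtain ⟨-, rfl⟩ := stepT_eq_some_iff.mp hat
    obtain ⟨l', hl'⟩ := ih hs.fire_self hrest hy
    refine ⟨l', .trans _ _ _ (traceEquiv_append_cons pre suf fun b hb => (hind b hb).symm) ?_⟩
    rw [descList_add_two a.isLt]
    exact hl'.cons a

end Net

/-- In the state category of `N_n` (with `m = n-1` places and events, event `i` being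
`t_{i+2}`): if `x·μ = y` where `x` begins with `1` and `y` begins with `0`, then in the
trace monoid `μ = t_k t_{k-1} ⋯ t₂ μ′` for some `2 ≤ k ≤ n`, and necessarily
`x = 1⋯1 0 ε_{k+1} ⋯ ε_{n-1}` (`k-1` ones followed by a zero). -/
theorem pipeline_trace_decomposition (n : ℕ) (hn : 2 ≤ n)
    (x y : Fin (n - 1) → Bool) (l : List (Fin (n - 1)))
    (hx : x ⟨0, by omega⟩ = true) (hy : y ⟨0, by omega⟩ = false)
    (h : stepsT (n - 1) x l = some y) :
    ∃ k, 2 ≤ k ∧ k ≤ n ∧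
      (∃ l', TraceEquiv (indepT (n - 1)) l (descList (n - 1) k ++ l')) ∧
      (∀ j : Fin (n - 1), (j : ℕ) < k - 1 → x j = true) ∧
      (∀ h' : k - 1 < n - 1, x ⟨k - 1, h'⟩ = false) := by
  obtain ⟨j, hj⟩ := exists_isFirstEmpty x
  have hj_pos : 0 < j := by
    by_contra! hj0
    obtain rfl : j = 0 := by omega
    simp [hj.empty (by omega)] at hx
  have hjn := hj.le
  refine ⟨j + 1, by omega, by omega, exists_traceEquiv_descList_append (by omega) j hj h hy,
    fun i hi => hj.marked i (by omega), fun h' => by simpa using hj.empty (by omega)⟩
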